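/- arXiv:1005.5478 — 2 statements merged into one kernel-verified Lean document; each statement's English description precedes it below -/
import Mathlib

section
/- In a Finsler space, for any curve c on M from x to y and any u ∈ T°_xM, the differential ρ_{c*u}: T_xM → T_yM of the horizontal-lift map ρ_c is given by parallel translation with respect to the Berwald connection along the horizontal lift of c through u: if v(t) is the unique vector field along the horizontal lift c^H_u that is Berwald-parallel with v(0) = v, then ρ_{c*u}(v) = v(1). Equivalently, a vertical vector field V(t) along c satisfies ∇_{ċ} V = 0 (with ∇_X V = [X^H, V]) if and only if ρ_{c*} V(0) = V(1). -/
/-!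
Statement 7.  We work in a natural coordinate chart, identifying the relevant part of
`M` with `E = ℝ^m` and the fibres of the slit tangent bundle `T°M` with (subsets of)
`E`.  The canonical horizontal distribution of the Finsler space is spanned by the
fields `H_i = ∂/∂x^i − Γ^j_i(x,u) ∂/∂u^j`; we encode the coefficients as the map
`G`, with `G x u w = Γ^j_i(x,u) w^i`, positively homogeneous of degree 1 in `u`.
For a curve `c`, the map `ρ_c(t)` sends `u₀` to the value at time `t` of the
horizontal lift of `c` through `u₀`; thus `ρ` is the flow of the horizontal lift,
i.e. `∂_t ρ(t, u₀) = −G(c t, ρ(t,u₀))(ċ t)`.  The Berwald covariant derivative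
along `c` of a vertical vector field `V(t)` (a vector field along the horizontal
lift of `c` through `u₀`, with the canonical identification of the vertical tangent
spaces with `E`) is `(∇_{ċ}V)^i = V̇^i + Γ^i_{jk}(c, ρ(·,u₀)) ċ^j V^k`, where
`Γ^i_{jk} = ∂Γ^i_j/∂u^k` are the Berwald connection coefficients; this is the
operator `BerwDeriv` below.  The differential `ρ_{c*u₀}` is `fderiv ℝ (ρ t) u₀`.
-/

open Set ContinuousLinearMap

/-- Uniqueness of solutions of a linear (time-dependent) ODE `y' = A t (y t)` with continuous
coefficient, agreeing at time `0`. -/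
lemma linear_ODE_unique {E : Type*} [NormedAddCommGroup E] [NormedSpace ℝ E]
    {A : ℝ → E →L[ℝ] E} (hA : Continuous A) {f g : ℝ → E}
    (hf : ∀ t, HasDerivAt f (A t (f t)) t) (hg : ∀ t, HasDerivAt g (A t (g t)) t)
    (h0 : f 0 = g 0) : ∀ t, f t = g t := by
  intro t
  set a : ℝ := -(|t| + 1) with ha
  set b : ℝ := |t| + 1 with hb
  have hab0 : (0:ℝ) ∈ Ioo a b := by
    have := abs_nonneg t
    constructor <;> simp only [ha, hb] <;> nlinarith
  have habt : t ∈ Icc a b := by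
    constructor
    · simp only [ha]; linarith [neg_abs_le t]
    · simp only [hb]; linarith [le_abs_self t]
  obtain ⟨C, hC⟩ := (isCompact_Icc (a := a) (b := b)).exists_bound_of_continuousOn
    hA.continuousOn
  set K : NNReal := ⟨max C 0, le_max_right C 0⟩ with hK
  set clamp : ℝ → ℝ := fun s => min (max s a) b with hclamp
  have hclampmem : ∀ s, clamp s ∈ Icc a b := by
    intro s
    constructor
    · exact le_min (le_max_right s a) (by simp [ha, hb]; linarith [abs_nonneg t])
    · exact min_le_right _ _
  have hclampeq : ∀ s ∈ Ioo a b, clamp s = s := by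
    intro s hs
    simp only [hclamp]
    rw [max_eq_left hs.1.le, min_eq_left hs.2.le]
  set v : ℝ → E → E := fun s u => A (clamp s) u with hv
  have hlip : ∀ s, LipschitzOnWith K (v s) univ := by
    intro s
    apply LipschitzWith.lipschitzOnWith
    refine (A (clamp s)).lipschitz.weaken ?_
    have := hC _ (hclampmem s)
    rw [← NNReal.coe_le_coe]
    exact le_trans this (le_max_left C 0)
  have key : EqOn f g (Icc a b) := by
    apply ODE_solution_unique_of_mem_Icc (v := v) (s := fun _ => univ) (fun s _ => hlip s) hab0
    · exact fun s _ => (hf s).continuousAt.continuousWithinAt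
    · intro s hs; rw [hv]; simp only [hclampeq s hs]; exact hf s
    · exact fun _ _ => mem_univ _
    · exact fun s _ => (hg s).continuousAt.continuousWithinAt
    · intro s hs; simp only [hv, hclampeq s hs]; exact hg s
    · exact fun _ _ => mem_univ _
    · exact h0
  exact key habt



lemma flow_fderiv_hasDerivAt {E : Type*} [NormedAddCommGroup E] [NormedSpace ℝ E]
    (c : ℝ → E) (hc : ContDiff ℝ (⊤ : ℕ∞) c)
    (G : E → E → (E →L[ℝ] E)) (hG : ContDiff ℝ (⊤ : ℕ∞) fun p : E × E => G p.1 p.2)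
    (ρ : ℝ → E → E)
    (hρflow : ∀ (t : ℝ) (u : E),
      HasDerivAt (fun s => ρ s u) (-(G (c t) (ρ t u) (deriv c t))) t)
    (hρsmooth : ContDiff ℝ (⊤ : ℕ∞) fun p : ℝ × E => ρ p.1 p.2)
    (u₀ v : E) (t : ℝ) :
    HasDerivAt (fun s => fderiv ℝ (ρ s) u₀ v)
      (-(fderiv ℝ (fun u => G (c t) u (deriv c t)) (ρ t u₀) (fderiv ℝ (ρ t) u₀ v))) t := by
  set f : ℝ × E → E := fun p => ρ p.1 p.2 with hf
  have hfd : Differentiable ℝ f := hρsmooth.differentiable (by simp)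
  set f' : ℝ × E → (ℝ × E) →L[ℝ] E := fderiv ℝ f with hf'
  have hf'smooth : ContDiff ℝ (⊤ : ℕ∞) f' := hρsmooth.fderiv_right (by simp)
  have hf'd : Differentiable ℝ f' := hf'smooth.differentiable (by simp)
  -- the derivative of `c` is smooth
  have hdc : ContDiff ℝ (⊤ : ℕ∞) (deriv c) := by
    have h1 : ContDiff ℝ (⊤ : ℕ∞) (fderiv ℝ c) := hc.fderiv_right (by simp)
    have h2 : ContDiff ℝ (⊤ : ℕ∞) fun s => fderiv ℝ c s 1 :=
      (ContinuousLinearMap.apply ℝ E (1:ℝ)).contDiff.comp h1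
    have heq : deriv c = fun s => fderiv ℝ c s 1 := funext fun s => fderiv_apply_one_eq_deriv.symm
    rw [heq]; exact h2
  -- Step A : partial derivative in the fibre direction
  have stepA : ∀ (s : ℝ) (u : E), fderiv ℝ (ρ s) u = (f' (s, u)).comp (inr ℝ ℝ E) := by
    intro s u
    have h1 : HasFDerivAt (fun u' : E => (s, u')) (inr ℝ ℝ E) u :=
      hasFDerivAt_prodMk_right s u
    have h2 : HasFDerivAt f (f' (s, u)) (s, u) := (hfd (s, u)).hasFDerivAt
    exact (h2.comp u h1).fderiv
  -- Step B : the time-partial derivative of `f` equals the flow vector field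
  have stepB : ∀ p : ℝ × E, f' p ((1:ℝ), (0:E)) = -(G (c p.1) (ρ p.1 p.2) (deriv c p.1)) := by
    intro p
    have h1 : HasDerivAt (fun s : ℝ => (s, p.2)) ((1:ℝ), (0:E)) p.1 :=
      (hasDerivAt_id p.1).prodMk (hasDerivAt_const p.1 p.2)
    have h2 : HasFDerivAt f (f' p) p := (hfd p).hasFDerivAt
    have h3 : HasDerivAt (fun s : ℝ => f (s, p.2)) (f' p ((1:ℝ), (0:E))) p.1 := by
      exact h2.comp_hasDerivAt p.1 h1
    exact h3.unique (hρflow p.1 p.2)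
  -- Step C : `s ↦ f' (s,u₀) (0,v)` has derivative `f'' (1,0) (0,v)`
  set f'' : (ℝ × E) →L[ℝ] (ℝ × E) →L[ℝ] E := fderiv ℝ f' (t, u₀) with hf''def
  have hd : HasDerivAt (fun s : ℝ => (s, u₀)) ((1:ℝ), (0:E)) t :=
    (hasDerivAt_id t).prodMk (hasDerivAt_const t u₀)
  have h1 : HasFDerivAt f' f'' (t, u₀) := (hf'd (t, u₀)).hasFDerivAt
  have h2 : HasDerivAt (fun s : ℝ => f' (s, u₀)) (f'' ((1:ℝ), (0:E))) t :=
    h1.comp_hasDerivAt t hd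
  have stepC : HasDerivAt (fun s : ℝ => f' (s, u₀) ((0:ℝ), v))
      (f'' ((1:ℝ), (0:E)) ((0:ℝ), v)) t :=
    (ContinuousLinearMap.apply ℝ E (((0:ℝ), v))).hasFDerivAt.comp_hasDerivAt t h2
  -- Step D : symmetry of the second derivative
  have stepD : f'' ((1:ℝ), (0:E)) ((0:ℝ), v) = f'' ((0:ℝ), v) ((1:ℝ), (0:E)) :=
    second_derivative_symmetric (fun y => (hfd y).hasFDerivAt) h1 _ _
  -- Step E : `f'' (0,v) (1,0)` is the derivative of `p ↦ f' p (1,0)` in direction `(0,v)`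
  have stepE : fderiv ℝ (fun p : ℝ × E => f' p ((1:ℝ), (0:E))) (t, u₀) ((0:ℝ), v)
      = f'' ((0:ℝ), v) ((1:ℝ), (0:E)) := by
    have h3 : HasFDerivAt (fun p : ℝ × E => f' p ((1:ℝ), (0:E)))
        ((ContinuousLinearMap.apply ℝ E (((1:ℝ), (0:E)))).comp f'') (t, u₀) :=
      (ContinuousLinearMap.apply ℝ E (((1:ℝ), (0:E)))).hasFDerivAt.comp (t, u₀) h1
    rw [h3.fderiv]; rfl
  -- Step F : rewrite `p ↦ f' p (1,0)` as the flow vector field `g`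
  set g : ℝ × E → E := fun p => -(G (c p.1) (ρ p.1 p.2) (deriv c p.1)) with hgdef
  have hfg : (fun p : ℝ × E => f' p ((1:ℝ), (0:E))) = g := funext stepB
  -- differentiability of `g`
  have hgsmooth : ContDiff ℝ (⊤ : ℕ∞) g := by
    have hΦ : ContDiff ℝ (⊤ : ℕ∞) (fun p : ℝ × E => G (c p.1) (ρ p.1 p.2)) :=
      hG.comp ((hc.comp contDiff_fst).prodMk hρsmooth)
    have happ : ContDiff ℝ (⊤ : ℕ∞) (fun p : ℝ × E => G (c p.1) (ρ p.1 p.2) (deriv c p.1)) :=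
      hΦ.clm_apply (hdc.comp contDiff_fst)
    exact happ.neg
  -- Step G : the partial derivative of `g` in the fibre direction
  have stepG : fderiv ℝ g (t, u₀) ((0:ℝ), v)
      = fderiv ℝ (fun u : E => g (t, u)) u₀ v := by
    have h1' : HasFDerivAt (fun u' : E => (t, u')) (inr ℝ ℝ E) u₀ :=
      hasFDerivAt_prodMk_right t u₀
    have h2' : HasFDerivAt g (fderiv ℝ g (t, u₀)) (t, u₀) :=
      (hgsmooth.differentiable (by simp) (t, u₀)).hasFDerivAt
    have h4 : fderiv ℝ (fun u : E => g (t, u)) u₀ = (fderiv ℝ g (t, u₀)).comp (inr ℝ ℝ E) :=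
      HasFDerivAt.fderiv (h2'.comp u₀ h1' : HasFDerivAt (fun u : E => g (t, u)) _ u₀)
    rw [h4]; rfl
  -- Step H : chain rule for `u ↦ -(G (c t) (ρ t u) (deriv c t))`
  have hρt : Differentiable ℝ (ρ t) := by
    intro u
    have h1' : HasFDerivAt (fun u' : E => (t, u')) (inr ℝ ℝ E) u :=
      hasFDerivAt_prodMk_right t u
    exact ((hfd (t, u)).hasFDerivAt.comp u h1').differentiableAt
  have hφ : Differentiable ℝ (fun u' : E => G (c t) u' (deriv c t)) := by
    have : ContDiff ℝ (⊤ : ℕ∞) (fun u' : E => G (c t) u' (deriv c t)) :=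
      (ContinuousLinearMap.apply ℝ E (deriv c t)).contDiff.comp
        (hG.comp (contDiff_const.prodMk contDiff_id))
    exact this.differentiable (by simp)
  have stepH : fderiv ℝ (fun u : E => g (t, u)) u₀
      = -((fderiv ℝ (fun u' : E => G (c t) u' (deriv c t)) (ρ t u₀)).comp
          (fderiv ℝ (ρ t) u₀)) := by
    have hcomp : (fun u : E => g (t, u))
        = fun u => -((fun u' : E => G (c t) u' (deriv c t)) (ρ t u)) := rfl
    rw [hcomp, fderiv_fun_neg]
    congr 1
    exact fderiv_comp u₀ (hφ (ρ t u₀)) (hρt u₀)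
  -- Put everything together
  have key : f'' ((1:ℝ), (0:E)) ((0:ℝ), v)
      = -(fderiv ℝ (fun u => G (c t) u (deriv c t)) (ρ t u₀) (fderiv ℝ (ρ t) u₀ v)) := by
    rw [stepD, ← stepE, hfg, stepG, stepH]
    simp
  have final : (fun s : ℝ => f' (s, u₀) ((0:ℝ), v)) = fun s => fderiv ℝ (ρ s) u₀ v := by
    funext s
    rw [stepA s u₀]
    rfl
  rw [← key, ← final]
  exact stepC



lemma berw_coeff_continuous {E : Type*} [NormedAddCommGroup E] [NormedSpace ℝ E]
    (c : ℝ → E) (hc : ContDiff ℝ (⊤ : ℕ∞) c)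
    (G : E → E → (E →L[ℝ] E)) (hG : ContDiff ℝ (⊤ : ℕ∞) fun p : E × E => G p.1 p.2)
    (ρ : ℝ → E → E) (hρsmooth : ContDiff ℝ (⊤ : ℕ∞) fun p : ℝ × E => ρ p.1 p.2)
    (u₀ : E) :
    Continuous (fun t => fderiv ℝ (fun u => G (c t) u (deriv c t)) (ρ t u₀)) := by
  set Φ : E × E → (E →L[ℝ] E) := fun p => G p.1 p.2 with hΦdef
  have hdc : ContDiff ℝ (⊤ : ℕ∞) (deriv c) := by
    have h1 : ContDiff ℝ (⊤ : ℕ∞) (fderiv ℝ c) := hc.fderiv_right (by simp)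
    have h2 : ContDiff ℝ (⊤ : ℕ∞) fun s => fderiv ℝ c s 1 :=
      (ContinuousLinearMap.apply ℝ E (1:ℝ)).contDiff.comp h1
    have heq : deriv c = fun s => fderiv ℝ c s 1 := funext fun s => fderiv_apply_one_eq_deriv.symm
    rw [heq]; exact h2
  have hΦ' : ContDiff ℝ (⊤ : ℕ∞) (fderiv ℝ Φ) := hG.fderiv_right (by simp)
  -- identify the operator
  have key : ∀ (t : ℝ), fderiv ℝ (fun u => G (c t) u (deriv c t)) (ρ t u₀)
      = (ContinuousLinearMap.apply ℝ E (deriv c t)).comp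
        ((fderiv ℝ Φ (c t, ρ t u₀)).comp (inr ℝ E E)) := by
    intro t
    have h1 : HasFDerivAt (fun u' : E => (c t, u')) (inr ℝ E E) (ρ t u₀) :=
      hasFDerivAt_prodMk_right (c t) (ρ t u₀)
    have h2 : HasFDerivAt Φ (fderiv ℝ Φ (c t, ρ t u₀)) (c t, ρ t u₀) :=
      (hG.differentiable (by simp) _).hasFDerivAt
    have h3 : HasFDerivAt (fun u' : E => Φ (c t, u'))
        ((fderiv ℝ Φ (c t, ρ t u₀)).comp (inr ℝ E E)) (ρ t u₀) := h2.comp _ h1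
    have h4 : HasFDerivAt (fun u' : E => G (c t) u' (deriv c t))
        ((ContinuousLinearMap.apply ℝ E (deriv c t)).comp
          ((fderiv ℝ Φ (c t, ρ t u₀)).comp (inr ℝ E E))) (ρ t u₀) :=
      (ContinuousLinearMap.apply ℝ E (deriv c t)).hasFDerivAt.comp _ h3
    exact h4.fderiv
  simp_rw [key]
  apply Continuous.clm_comp
  · exact (ContinuousLinearMap.apply ℝ E).continuous.comp hdc.continuous
  · apply Continuous.clm_comp
    · exact (hΦ'.continuous).comp (hc.continuous.prodMk
        (hρsmooth.continuous.comp (continuous_id.prodMk continuous_const)))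
    · exact continuous_const


/-- in a Finsler space, the differential `ρ_{c*u₀} : T_xM → T_yM` of the
horizontal-lift map `ρ_c` is given by parallel translation with respect to the
Berwald connection along the horizontal lift of `c` through `u₀`: a vertical vector
field `V(t)` along `c` satisfies `∇_{ċ}V = 0` if and only if it is obtained from
`V(0)` by `ρ_{c*}`; in particular if `v(t)` is Berwald-parallel along the horizontal
lift with `v(0) = v` then `ρ_{c*u₀}(v) = v(1)`. -/


theorem stmt7 {m : ℕ}
    -- the curve `c` in `M`, in coordinates
    (c : ℝ → EuclideanSpace ℝ (Fin m)) (hc : ContDiff ℝ (⊤ : ℕ∞) c)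
    -- the coefficients `Γ^j_i(x,u)` of the canonical horizontal distribution
    (G : EuclideanSpace ℝ (Fin m) → EuclideanSpace ℝ (Fin m) →
      (EuclideanSpace ℝ (Fin m) →L[ℝ] EuclideanSpace ℝ (Fin m)))
    (hG : ContDiff ℝ (⊤ : ℕ∞) (fun p : EuclideanSpace ℝ (Fin m) × EuclideanSpace ℝ (Fin m) =>
      G p.1 p.2))
    -- positive homogeneity of the nonlinear connection
    (hGhom : ∀ (x u : EuclideanSpace ℝ (Fin m)) (lam : ℝ), 0 < lam →
      G x (lam • u) = lam • G x u)
    -- `ρ t` is the horizontal-lift flow : `ρ t u₀ = ρ_c(t)(u₀)`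
    (ρ : ℝ → EuclideanSpace ℝ (Fin m) → EuclideanSpace ℝ (Fin m))
    (hρ0 : ∀ u, ρ 0 u = u)
    (hρflow : ∀ (t : ℝ) (u : EuclideanSpace ℝ (Fin m)),
      HasDerivAt (fun s => ρ s u) (-(G (c t) (ρ t u) (deriv c t))) t)
    (hρsmooth : ContDiff ℝ (⊤ : ℕ∞) (fun p : ℝ × EuclideanSpace ℝ (Fin m) => ρ p.1 p.2))
    -- the point `u₀ ∈ T°_xM`, and its horizontal lift stays in the slit bundle
    (u₀ : EuclideanSpace ℝ (Fin m)) (hu₀ : u₀ ≠ 0) (hslit : ∀ t, ρ t u₀ ≠ 0) :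
    -- the Berwald covariant derivative along `c` of a vertical field `V` along the
    -- horizontal lift of `c` through `u₀`
    let BerwDeriv : (ℝ → EuclideanSpace ℝ (Fin m)) → ℝ → EuclideanSpace ℝ (Fin m) :=
      fun V t => deriv V t +
        (fderiv ℝ (fun u => G (c t) u (deriv c t)) (ρ t u₀)) (V t)
    ∀ V : ℝ → EuclideanSpace ℝ (Fin m), Differentiable ℝ V →
      ((∀ t, BerwDeriv V t = 0) ↔ (∀ t, fderiv ℝ (ρ t) u₀ (V 0) = V t)) ∧
      ((∀ t, BerwDeriv V t = 0) → fderiv ℝ (ρ 1) u₀ (V 0) = V 1) := by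
  intro BerwDeriv V hV
  set B : ℝ → (EuclideanSpace ℝ (Fin m) →L[ℝ] EuclideanSpace ℝ (Fin m)) :=
    fun t => fderiv ℝ (fun u => G (c t) u (deriv c t)) (ρ t u₀) with hBdef
  have hBcont : Continuous B := berw_coeff_continuous c hc G hG ρ hρsmooth u₀
  set A : ℝ → (EuclideanSpace ℝ (Fin m) →L[ℝ] EuclideanSpace ℝ (Fin m)) :=
    fun t => -(B t) with hAdef
  have hAcont : Continuous A := hBcont.neg
  set w : ℝ → EuclideanSpace ℝ (Fin m) := fun t => fderiv ℝ (ρ t) u₀ (V 0) with hwdef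
  have hw : ∀ t, HasDerivAt w (A t (w t)) t := by
    intro t
    have h := flow_fderiv_hasDerivAt c hc G hG ρ hρflow hρsmooth u₀ (V 0) t
    simpa [hAdef, hBdef, hwdef, ContinuousLinearMap.neg_apply] using h
  have hw0 : w 0 = V 0 := by
    have hid : ρ 0 = _root_.id := funext hρ0
    simp [hwdef, hid, fderiv_id]
  have main : (∀ t, BerwDeriv V t = 0) ↔ ∀ t, fderiv ℝ (ρ t) u₀ (V 0) = V t := by
    constructor
    · intro hpar t
      have hVode : ∀ s, HasDerivAt V (A s (V s)) s := by
        intro s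
        have h1 : deriv V s + B s (V s) = 0 := hpar s
        have h2 : deriv V s = -(B s (V s)) := eq_neg_of_add_eq_zero_left h1
        have h3 : A s (V s) = -(B s (V s)) := by simp [hAdef]
        have h4 := (hV s).hasDerivAt
        rw [h2, ← h3] at h4
        exact h4
      exact linear_ODE_unique hAcont hw hVode hw0 t
    · intro heq t
      have hVw : V = w := funext fun s => (heq s).symm
      have h1 : HasDerivAt V (A t (V t)) t := by rw [hVw]; exact hw t
      show deriv V t + B t (V t) = 0
      rw [h1.deriv]
      simp [hAdef]
  exact ⟨main, fun hpar => (main.1 hpar) 1⟩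
end

section
/- Let C^2 be the ℝ-span of vertical vector fields R(X,Y) on the indicatrix bundle of a Landsberg space (X, Y ∈ 𝔛(M)), and inductively let C^k be the ℝ-span of elements of C^{k−1} together with fields ∇_X V for X ∈ 𝔛(M), V ∈ C^{k−1}. Then: (1) each C^k is a C^∞(M)-module; (2) [C^k, C^l] ⊂ C^{k+l}; (3) for m = 0, 1, 2, …, the quotient C^{m+2}/C^{m+1} is spanned by equivalence classes of fields of the form ∇_{X_1}∇_{X_2}⋯∇_{X_m}(R(Y,Z)) for vector fields X_1, …, X_m, Y, Z on M (with C^1 = {0}). -/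
structure BaseManifold : Type 1 where
  M : Type
  [topM : TopologicalSpace M]
  Cf : Type
  [cfRing : CommRing Cf]
  [cfAlg : Algebra ℝ Cf]
  evalCf : Cf → M → ℝ
  VF : Type
  [vfGrp : AddCommGroup VF]
  [vfModR : Module ℝ VF]
  [vfModC : Module Cf VF]
  [vfTower : IsScalarTower ℝ Cf VF]
  bracket : VF → VF → VF
  bracket_add_left : ∀ X Y Z, bracket (X + Y) Z = bracket X Z + bracket Y Z
  bracket_add_right : ∀ X Y Z, bracket X (Y + Z) = bracket X Y + bracket X Z
  actF : VF → Cf → Cf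
  actF_zero : ∀ f, actF 0 f = 0
  T : M → Type
  [tGrp : ∀ x, AddCommGroup (T x)]
  [tModR : ∀ x, Module ℝ (T x)]
  evalVF : VF → ∀ x, T x
  evalVF_zero : ∀ x, evalVF 0 x = 0
  Curve : M → M → Type

attribute [instance] BaseManifold.topM BaseManifold.cfRing BaseManifold.cfAlg
  BaseManifold.vfGrp BaseManifold.vfModR BaseManifold.vfModC BaseManifold.vfTower
  BaseManifold.tGrp BaseManifold.tModR

structure VecBundle (B : BaseManifold) : Type 1 where
  Fib : B.M → Type
  [fibGrp : ∀ x, AddCommGroup (Fib x)]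
  [fibMod : ∀ x, Module ℝ (Fib x)]
  Sec : Type
  [secGrp : AddCommGroup Sec]
  [secModR : Module ℝ Sec]
  [secModC : Module B.Cf Sec]
  [secTower : IsScalarTower ℝ B.Cf Sec]
  evalSec : ∀ x, Sec →ₗ[ℝ] Fib x
  evalSec_smulC : ∀ (f : B.Cf) (s : Sec) (x : B.M),
    evalSec x (f • s) = B.evalCf f x • evalSec x s

attribute [instance] VecBundle.fibGrp VecBundle.fibMod VecBundle.secGrp
  VecBundle.secModR VecBundle.secModC VecBundle.secTower

structure LinConnection (B : BaseManifold) (V : VecBundle B) where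
  cov : B.VF → V.Sec → V.Sec
  cov_addX : ∀ X Y s, cov (X + Y) s = cov X s + cov Y s
  cov_smulX : ∀ (f : B.Cf) X s, cov (f • X) s = f • cov X s
  cov_addS : ∀ X s t, cov X (s + t) = cov X s + cov X t
  cov_leibniz : ∀ X (f : B.Cf) s, cov X (f • s) = f • cov X s + (B.actF X f) • s
  tau : ∀ {x y : B.M}, B.Curve x y → (V.Fib x ≃ₗ[ℝ] V.Fib y)
  parallel_iff : ∀ s : V.Sec,
    (∀ X, cov X s = 0) ↔
      ∀ (x y : B.M) (c : B.Curve x y), tau c (V.evalSec x s) = V.evalSec y s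

/-- An abstract Landsberg space over the base `B`: the indicatrix bundle `𝕀` of a
Finsler space, presented through the algebra `CfI` of smooth functions on `𝕀`
(with the pull-back `π^*` of functions on `M`), the Lie algebra `Vert` of vertical
vector fields on `𝕀` (acting on functions as derivations), the operator
`∇_X V = [X^H, V]` determined by the canonical horizontal distribution (with `X^H`
the horizontal lift of `X`, acting on functions by `actH`), the fibre metric `g`
induced by the fundamental tensor, and the curvature `R` of the horizontal
distribution.  The Landsberg property is `L_{X^H} g = 0`, encoded by the field
`landsberg`. -/
structure LandsbergSetting (B : BaseManifold) : Type 1 where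
  /-- smooth functions on the indicatrix bundle `𝕀` -/
  CfI : Type
  [cfIRing : CommRing CfI]
  [cfIAlg : Algebra ℝ CfI]
  /-- pull-back `π^* : C^∞(M) → C^∞(𝕀)` -/
  pull : B.Cf →ₐ[ℝ] CfI
  /-- vertical vector fields on `𝕀` -/
  Vert : Type
  [vGrp : AddCommGroup Vert]
  [vModR : Module ℝ Vert]
  [vModC : Module CfI Vert]
  [vTower : IsScalarTower ℝ CfI Vert]
  /-- the bracket of vertical vector fields (vertical fields are closed under bracket) -/
  brV : Vert → Vert → Vert
  brV_add_left : ∀ V W U, brV (V + W) U = brV V U + brV W U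
  brV_add_right : ∀ V W U, brV V (W + U) = brV V W + brV V U
  brV_skew : ∀ V W, brV V W = - brV W V
  brV_jacobi : ∀ V W U, brV V (brV W U) = brV (brV V W) U + brV W (brV V U)
  /-- the action of a vertical vector field on functions on `𝕀`, as a derivation -/
  actV : Vert → CfI → CfI
  actV_add : ∀ V f g, actV V (f + g) = actV V f + actV V g
  actV_mul : ∀ V f g, actV V (f * g) = f * actV V g + g * actV V f
  actV_brV : ∀ V W f, actV (brV V W) f = actV V (actV W f) - actV W (actV V f)
  /-- the action of the horizontal lift `X^H` on functions on `𝕀` -/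
  actH : B.VF → CfI → CfI
  actH_add : ∀ X f g, actH X (f + g) = actH X f + actH X g
  actH_mul : ∀ X f g, actH X (f * g) = f * actH X g + g * actH X f
  actH_pull : ∀ X f, actH X (pull f) = pull (B.actF X f)
  /-- the operator `∇_X V = [X^H, V]` on vertical vector fields -/
  nabla : B.VF → Vert → Vert
  nabla_addX : ∀ X Y V, nabla (X + Y) V = nabla X V + nabla Y V
  nabla_smulX : ∀ (f : B.Cf) X V, nabla (f • X) V = pull f • nabla X V
  nabla_addV : ∀ X V W, nabla X (V + W) = nabla X V + nabla X W
  nabla_leibniz : ∀ X (a : CfI) V, nabla X (a • V) = a • nabla X V + (actH X a) • V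
  /-- `∇_X` is a derivation of the bracket (Jacobi identity for `[X^H, ·]`) -/
  nabla_brV : ∀ X V W, nabla X (brV V W) = brV (nabla X V) W + brV V (nabla X W)
  /-- `∇_X V = [X^H, V]` acts on functions as the commutator of `X^H` and `V` -/
  actV_nabla : ∀ X V f, actV (nabla X V) f = actH X (actV V f) - actV V (actH X f)
  /-- the fibre metric on `𝕀` induced by the fundamental tensor -/
  g : Vert → Vert → CfI
  g_symm : ∀ V W, g V W = g W V
  g_add_left : ∀ V W U, g (V + W) U = g V U + g W U
  g_smul_left : ∀ (a : CfI) V W, g (a • V) W = a * g V W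
  /-- the Landsberg property: `L_{X^H} g = 0` for every vector field `X` on `M` -/
  landsberg : ∀ X V W, actH X (g V W) = g (nabla X V) W + g V (nabla X W)
  /-- the curvature of the canonical horizontal distribution, a vertical field -/
  R : B.VF → B.VF → Vert
  R_add_left : ∀ X X' Y, R (X + X') Y = R X Y + R X' Y
  R_skew : ∀ X Y, R X Y = - R Y X
  R_smul_left : ∀ (f : B.Cf) X Y, R (f • X) Y = pull f • R X Y
  /-- the curvature identity `∇_X∇_Y V − ∇_Y∇_X V − ∇_{[X,Y]} V = [V, R(X,Y)]` -/
  curvId : ∀ X Y V,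
    nabla X (nabla Y V) - nabla Y (nabla X V) - nabla (B.bracket X Y) V
      = brV V (R X Y)

attribute [instance] LandsbergSetting.cfIRing LandsbergSetting.cfIAlg
  LandsbergSetting.vGrp LandsbergSetting.vModR LandsbergSetting.vModC
  LandsbergSetting.vTower

/-- The sections of the Lie algebra bundle `K → M` of infinitesimal isometries of the
indicatrix fibres: the vertical vector fields whose fibrewise Lie derivative of the
fibre metric `g` vanishes. -/
def LandsbergSetting.SecK {B : BaseManifold} (L : LandsbergSetting B) : Set L.Vert :=
  {V | ∀ W U : L.Vert, L.actV V (L.g W U) = L.g (L.brV V W) U + L.g W (L.brV V U)}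

/-- The spaces `C^k` of vertical vector fields on the indicatrix bundle: `C^2` is the
`ℝ`-span of the curvature fields `R(X,Y)`, and `C^k` is spanned by `C^{k-1}` together
with the fields `∇_X V` with `V ∈ C^{k-1}` (`C^0 = C^1 = 0`). -/
def Ck {B : BaseManifold} (L : LandsbergSetting B) : ℕ → Submodule ℝ L.Vert
  | 0 => ⊥
  | 1 => ⊥
  | 2 => Submodule.span ℝ {v : L.Vert | ∃ X Y : B.VF, v = L.R X Y}
  | (k + 3) => Ck L (k + 2) ⊔
      Submodule.span ℝ {v : L.Vert | ∃ (X : B.VF) (w : L.Vert),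
        w ∈ Ck L (k + 2) ∧ v = L.nabla X w}

/-- Iterated covariant derivatives `∇_{X_1}∇_{X_2}⋯∇_{X_m}(R(Y,Z))` of curvature
fields. -/
def IterCurv {B : BaseManifold} (L : LandsbergSetting B) : ℕ → Set L.Vert
  | 0 => {v : L.Vert | ∃ Y Z : B.VF, v = L.R Y Z}
  | (m + 1) => {v : L.Vert | ∃ (X : B.VF) (w : L.Vert),
      w ∈ IterCurv L m ∧ v = L.nabla X w}

/-! All three parts are inductions on `k` driven by three identities: the Leibniz rule
`f • ∇_X V = ∇_X (f • V) - (X^H f) • V`, the derivation rule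
`[V, ∇_X W] = ∇_X [V, W] - [∇_X V, W]`, and the curvature identity, which writes
`[V, R(X,Y)]` through second covariant derivatives of `V`.

The operators `∇_X` and `[V, ·]` are only additive here, not `ℝ`-linear. This is harmless
because real scalars can be absorbed into the vector field, `r • ∇_X V = ∇_{r X} V` and
`r • R(X,Y) = R(r X, Y)`: the `ℝ`-span of such fields is their additive closure. -/

theorem AddMonoidHom.apply_mem_of_mem_span {R S M N : Type*} [Semiring R] [Semiring S]
    [AddCommMonoid M] [Module R M] [AddCommMonoid N] [Module S N] (φ : M →+ N) {s : Set M}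
    {P : Submodule S N} (hs : ∀ (r : R) x, x ∈ s → r • x ∈ s) (h : ∀ x ∈ s, φ x ∈ P) {x : M}
    (hx : x ∈ Submodule.span R s) : φ x ∈ P := by
  suffices (Submodule.span R s).toAddSubmonoid ≤ P.toAddSubmonoid.comap φ from this hx
  rw [Submodule.span_eq_closure, AddSubmonoid.closure_le]
  rintro - ⟨r, -, x, hx, rfl⟩
  exact h _ (hs r x hx)

namespace LandsbergSetting

variable {B : BaseManifold} (L : LandsbergSetting B)

def nablaAddHom (X : B.VF) : L.Vert →+ L.Vert :=
  AddMonoidHom.mk' (L.nabla X) (L.nabla_addV X)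

def brVAddHom (v : L.Vert) : L.Vert →+ L.Vert :=
  AddMonoidHom.mk' (L.brV v) (L.brV_add_right v)

theorem nabla_zero (X : B.VF) : L.nabla X 0 = 0 :=
  map_zero (L.nablaAddHom X)

theorem brV_zero (v : L.Vert) : L.brV v 0 = 0 :=
  map_zero (L.brVAddHom v)

def curvatureFields : Set L.Vert :=
  {v | ∃ X Y : B.VF, v = L.R X Y}

def nablaImage (S : Set L.Vert) : Set L.Vert :=
  {v | ∃ (X : B.VF) (w : L.Vert), w ∈ S ∧ v = L.nabla X w}

theorem smul_R (r : ℝ) (X Y : B.VF) : r • L.R X Y = L.R (algebraMap ℝ B.Cf r • X) Y := by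
  rw [L.R_smul_left, AlgHom.commutes, algebraMap_smul]

theorem smul_nabla (r : ℝ) (X : B.VF) (v : L.Vert) :
    r • L.nabla X v = L.nabla (algebraMap ℝ B.Cf r • X) v := by
  rw [L.nabla_smulX, AlgHom.commutes, algebraMap_smul]

theorem smul_mem_curvatureFields (r : ℝ) {v : L.Vert} (hv : v ∈ L.curvatureFields) :
    r • v ∈ L.curvatureFields := by
  obtain ⟨X, Y, rfl⟩ := hv
  exact ⟨_, Y, L.smul_R r X Y⟩

theorem smul_mem_nablaImage (S : Set L.Vert) (r : ℝ) {v : L.Vert} (hv : v ∈ L.nablaImage S) :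
    r • v ∈ L.nablaImage S := by
  obtain ⟨X, w, hw, rfl⟩ := hv
  exact ⟨_, w, hw, L.smul_nabla r X w⟩

theorem pull_smul_nabla (f : B.Cf) (X : B.VF) (v : L.Vert) :
    L.pull f • L.nabla X v = L.nabla X (L.pull f • v) - L.pull (B.actF X f) • v := by
  rw [L.nabla_leibniz, L.actH_pull, add_sub_cancel_right]

theorem brV_nabla (v : L.Vert) (X : B.VF) (u : L.Vert) :
    L.brV v (L.nabla X u) = L.nabla X (L.brV v u) - L.brV (L.nabla X v) u := by
  rw [L.nabla_brV, add_sub_cancel_left]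

end LandsbergSetting

open LandsbergSetting Submodule

section Ck

variable {B : BaseManifold} (L : LandsbergSetting B)

theorem Ck_one : Ck L 1 = ⊥ := rfl

theorem Ck_add_three (k : ℕ) :
    Ck L (k + 3) = Ck L (k + 2) ⊔ span ℝ (L.nablaImage (Ck L (k + 2))) := rfl

theorem Ck_le_succ : ∀ k, Ck L k ≤ Ck L (k + 1)
  | 0 | 1 => bot_le
  | _ + 2 => le_sup_left

theorem Ck_mono : Monotone (Ck L) :=
  monotone_nat_of_le_succ (Ck_le_succ L)

theorem nabla_mem_Ck : ∀ (k : ℕ) (X : B.VF) {v : L.Vert}, v ∈ Ck L k →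
    L.nabla X v ∈ Ck L (k + 1)
  | 0, X, v, hv | 1, X, v, hv => by
    rw [(mem_bot ℝ).mp hv, L.nabla_zero]
    exact zero_mem _
  | k + 2, X, v, hv => mem_sup_right (subset_span ⟨X, v, hv, rfl⟩)

theorem pull_smul_mem_Ck : ∀ (k : ℕ) (f : B.Cf) {v : L.Vert}, v ∈ Ck L k →
    L.pull f • v ∈ Ck L k
  | 0, f, v, hv | 1, f, v, hv => by
    rw [(mem_bot ℝ).mp hv, smul_zero]
    exact zero_mem _
  | 2, f, v, hv =>
    AddMonoidHom.apply_mem_of_mem_span (DistribSMul.toAddMonoidHom _ (L.pull f))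
      L.smul_mem_curvatureFields
      (by rintro - ⟨X, Y, rfl⟩; exact subset_span ⟨f • X, Y, (L.R_smul_left f X Y).symm⟩) hv
  | k + 3, f, v, hv => by
    rw [Ck_add_three] at hv ⊢
    obtain ⟨w, hw, u, hu, rfl⟩ := mem_sup.mp hv
    rw [smul_add]
    refine add_mem (mem_sup_left (pull_smul_mem_Ck (k + 2) f hw)) ?_
    refine AddMonoidHom.apply_mem_of_mem_span (DistribSMul.toAddMonoidHom _ (L.pull f))
      (L.smul_mem_nablaImage _) ?_ hu
    rintro - ⟨X, u, hu, rfl⟩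
    change L.pull f • L.nabla X u ∈ _
    rw [pull_smul_nabla]
    exact sub_mem (mem_sup_right (subset_span ⟨X, _, pull_smul_mem_Ck (k + 2) f hu, rfl⟩))
      (mem_sup_left (pull_smul_mem_Ck (k + 2) _ hu))

theorem brV_mem_Ck : ∀ (l k : ℕ) {v w : L.Vert}, v ∈ Ck L k → w ∈ Ck L l →
    L.brV v w ∈ Ck L (k + l)
  | 0, k, v, w, _, hw | 1, k, v, w, _, hw => by
    rw [(mem_bot ℝ).mp hw, L.brV_zero]
    exact zero_mem _
  | 2, k, v, w, hv, hw => by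
    refine AddMonoidHom.apply_mem_of_mem_span (L.brVAddHom v) L.smul_mem_curvatureFields ?_ hw
    rintro - ⟨X, Y, rfl⟩
    change L.brV v (L.R X Y) ∈ _
    rw [← L.curvId]
    exact sub_mem (sub_mem (nabla_mem_Ck L _ X (nabla_mem_Ck L _ Y hv))
      (nabla_mem_Ck L _ Y (nabla_mem_Ck L _ X hv)))
      (Ck_le_succ L _ (nabla_mem_Ck L _ _ hv))
  | l + 3, k, v, w, hv, hw => by
    rw [Ck_add_three] at hw
    obtain ⟨w₁, hw₁, w₂, hw₂, rfl⟩ := mem_sup.mp hw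
    rw [L.brV_add_right]
    refine add_mem (Ck_mono L (by omega) (brV_mem_Ck (l + 2) k hv hw₁)) ?_
    refine AddMonoidHom.apply_mem_of_mem_span (L.brVAddHom v) (L.smul_mem_nablaImage _) ?_ hw₂
    rintro - ⟨X, u, hu, rfl⟩
    change L.brV v (L.nabla X u) ∈ _
    rw [brV_nabla]
    refine sub_mem (nabla_mem_Ck L _ X (brV_mem_Ck (l + 2) k hv hu)) ?_
    rw [show k + (l + 3) = k + 1 + (l + 2) by omega]
    exact brV_mem_Ck (l + 2) (k + 1) (nabla_mem_Ck L k X hv) hu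

theorem smul_mem_IterCurv (r : ℝ) : ∀ (m : ℕ) {v : L.Vert}, v ∈ IterCurv L m →
    r • v ∈ IterCurv L m
  | 0, _, hv => L.smul_mem_curvatureFields r hv
  | _ + 1, _, hv => L.smul_mem_nablaImage _ r hv

theorem IterCurv_subset_Ck : ∀ m, IterCurv L m ⊆ Ck L (m + 2)
  | 0 => subset_span
  | m + 1 => by
    rintro - ⟨X, w, hw, rfl⟩
    exact nabla_mem_Ck L _ X (IterCurv_subset_Ck m hw)

theorem nabla_mem_span_IterCurv (m : ℕ) (X : B.VF) {w : L.Vert}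
    (hw : w ∈ span ℝ (IterCurv L m)) : L.nabla X w ∈ span ℝ (IterCurv L (m + 1)) :=
  AddMonoidHom.apply_mem_of_mem_span (L.nablaAddHom X) (fun r _ => smul_mem_IterCurv L r m)
    (fun u hu => subset_span (s := IterCurv L (m + 1)) ⟨X, u, hu, rfl⟩) hw

theorem Ck_add_two_eq (m : ℕ) : Ck L (m + 2) = Ck L (m + 1) ⊔ span ℝ (IterCurv L m) := by
  induction m with
  | zero => rw [Ck_one, bot_sup_eq]; rfl
  | succ m ih =>
    refine le_antisymm ?_ (sup_le (Ck_le_succ L _) (span_le.mpr (IterCurv_subset_Ck L _)))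
    refine sup_le le_sup_left (span_le.mpr ?_)
    rintro - ⟨X, w, hw, rfl⟩
    rw [ih] at hw
    obtain ⟨w₁, hw₁, w₂, hw₂, rfl⟩ := mem_sup.mp hw
    rw [L.nabla_addV]
    exact add_mem (mem_sup_left (nabla_mem_Ck L _ X hw₁))
      (mem_sup_right (nabla_mem_span_IterCurv L m X hw₂))

end Ck

/-- (1) each `C^k` is a `C^∞(M)`-module; (2) `[C^k, C^l] ⊂ C^{k+l}`;
(3) `C^1 = 0` and, modulo `C^{m+1}`, the space `C^{m+2}` is spanned by the fields
`∇_{X_1}∇_{X_2}⋯∇_{X_m}(R(Y,Z))` (stated as the equality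
`C^{m+2} = C^{m+1} ⊔ span ℝ (IterCurv m)`, which says exactly that the quotient
`C^{m+2}/C^{m+1}` is spanned by the classes of these fields). -/
theorem stmt8 (B : BaseManifold) (L : LandsbergSetting B) :
    -- (1) each `C^k` is a `C^∞(M)`-module
    (∀ (k : ℕ) (f : B.Cf) (v : L.Vert), v ∈ Ck L k → L.pull f • v ∈ Ck L k) ∧
    -- (2) `[C^k, C^l] ⊂ C^{k+l}`
    (∀ (k l : ℕ) (v w : L.Vert), v ∈ Ck L k → w ∈ Ck L l →
        L.brV v w ∈ Ck L (k + l)) ∧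
    -- (3) `C^{m+2}/C^{m+1}` is spanned by iterated derivatives of curvature fields
    (Ck L 1 = ⊥) ∧
    (∀ m : ℕ, Ck L (m + 2) = Ck L (m + 1) ⊔ Submodule.span ℝ (IterCurv L m)) :=
  ⟨fun k f _ => pull_smul_mem_Ck L k f,
    fun k l _ _ => brV_mem_Ck L l k,
    Ck_one L,
    Ck_add_two_eq L⟩
end
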